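/- Let (F, ‖·‖) be a finite, positively polarizable, strictly hyperbolic proper hyperbolically normed cone with some t* ∈ F of norm 1, and suppose there exists t ∈ core(F) with ‖t‖ = 1, where core(F) = {x ∈ F : ∀ v ∈ span(F) ∃ ε > 0, x + εv ∈ F}. Then the induced inner product ⟨·,·⟩ on span(F) is Lorentzian. -/

import Mathlib

/-- A linear cone over `ℝ`: a commutative cancellative monoid with scalar
multiplication by real numbers, subject to the usual axioms for nonnegative scalars. -/
class RealLinearCone (F : Type*) [AddCancelCommMonoid F] where
  csmul : ℝ → F → F
  csmul_add : ∀ {a : ℝ}, 0 ≤ a → ∀ v w : F, csmul a (v + w) = csmul a v + csmul a w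
  add_csmul : ∀ {a b : ℝ}, 0 ≤ a → 0 ≤ b → ∀ v : F, csmul (a + b) v = csmul a v + csmul b v
  mul_csmul : ∀ {a b : ℝ}, 0 ≤ a → 0 ≤ b → ∀ v : F, csmul a (csmul b v) = csmul (a * b) v
  one_csmul : ∀ v : F, csmul 1 v = v

/-- The pairing induced by a (finite-valued) hyperbolic norm via polarization:
`⟨v,w⟩ = ½(‖v+w‖² - ‖v‖² - ‖w‖²)`. -/
noncomputable def hInner {F : Type*} [AddCancelCommMonoid F] (nn : F → ℝ) (v w : F) : ℝ :=
  ((nn (v + w)) ^ 2 - (nn v) ^ 2 - (nn w) ^ 2) / 2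

/-- A symmetric bilinear form `B` on a real vector space `V` is Lorentzian if `V`
decomposes as a direct sum of a one-dimensional subspace on which `B` is positive
definite and a complement on which `B` is negative definite. -/
def IsLorentzian {V : Type*} [AddCommGroup V] [Module ℝ V] (B : V →ₗ[ℝ] V →ₗ[ℝ] ℝ) : Prop :=
  ∃ V₁ V₂ : Submodule ℝ V, IsCompl V₁ V₂ ∧ Module.finrank ℝ V₁ = 1 ∧
    (∀ x ∈ V₁, x ≠ 0 → 0 < B x x) ∧ (∀ x ∈ V₂, x ≠ 0 → B x x < 0)

/-!
The unit vector `τ = ι t` has `B τ τ = ‖t‖² = 1`, so `V` splits as `ℝ τ ⊕ τ^⊥`. For `x ∈ τ^⊥`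
the core hypothesis gives `u ∈ F` with `ι u = τ + ε x`; then `B(τ, ι u) = 1` and
`‖u‖² = 1 + ε² B(x, x)`. The reverse Cauchy–Schwarz inequality `‖t‖‖u‖ ≤ ⟨t, u⟩` forces `‖u‖ ≤ 1`,
hence `B(x, x) ≤ 0`, and if `B(x, x) = 0` we are in its equality case, where strict hyperbolicity
gives `u = t`, i.e. `x = 0`.
-/

theorem LinearMap.isLorentzian_of_neg_on_ker {V : Type*} [AddCommGroup V] [Module ℝ V]
    {B : V →ₗ[ℝ] V →ₗ[ℝ] ℝ} {τ : V} (hτ : 0 < B τ τ)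
    (hneg : ∀ x, B τ x = 0 → x ≠ 0 → B x x < 0) : IsLorentzian B := by
  have hτ0 : τ ≠ 0 := by
    rintro rfl
    simp at hτ
  refine ⟨ℝ ∙ τ, LinearMap.ker (B τ), ?_, finrank_span_singleton hτ0, ?_, hneg⟩
  · rw [← LinearMap.orthogonal_span_singleton_eq_to_lin_ker]
    exact LinearMap.isCompl_span_singleton_orthogonal hτ.ne'
  · rintro _ hx hx0
    obtain ⟨c, rfl⟩ := Submodule.mem_span_singleton.mp hx
    have hc : c ≠ 0 := by
      rintro rfl
      simp at hx0
    simpa [mul_assoc] using mul_pos (mul_self_pos.mpr hc) hτ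

theorem RealLinearCone.add_self_eq_csmul_two {F : Type*} [AddCancelCommMonoid F]
    [RealLinearCone F] (v : F) : v + v = csmul 2 v := by
  have h := add_csmul (a := (1 : ℝ)) (b := 1) zero_le_one zero_le_one v
  rw [one_csmul] at h
  norm_num at h
  exact h.symm

section HyperbolicNorm

variable {F : Type*} [AddCancelCommMonoid F] {nn : F → ℝ}

theorem mul_le_hInner (hnonneg : ∀ v : F, 0 ≤ nn v)
    (hrev : ∀ v w : F, nn v + nn w ≤ nn (v + w)) (v w : F) : nn v * nn w ≤ hInner nn v w := by
  have hsq : (nn v + nn w) ^ 2 ≤ nn (v + w) ^ 2 := by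
    gcongr
    · linarith [hnonneg v, hnonneg w]
    · exact hrev v w
  rw [hInner]
  linarith

theorem nn_add_eq_of_hInner_eq_mul (hnonneg : ∀ v : F, 0 ≤ nn v) {v w : F}
    (h : hInner nn v w = nn v * nn w) : nn (v + w) = nn v + nn w := by
  have hsq : nn (v + w) ^ 2 = (nn v + nn w) ^ 2 := by
    rw [hInner] at h
    linarith
  exact (pow_left_inj₀ (hnonneg _) (add_nonneg (hnonneg v) (hnonneg w)) two_ne_zero).mp hsq

variable [RealLinearCone F]

theorem hInner_self (hhom : ∀ a : ℝ, 0 ≤ a → ∀ v : F, nn (RealLinearCone.csmul a v) = a * nn v)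
    (v : F) : hInner nn v v = nn v ^ 2 := by
  rw [hInner, RealLinearCone.add_self_eq_csmul_two, hhom 2 zero_le_two]
  ring

theorem eq_of_nn_add_eq_add (hhom : ∀ a : ℝ, 0 ≤ a → ∀ v : F, nn (RealLinearCone.csmul a v) = a * nn v)
    (hstrict : ∀ u v : F, nn (u + v) = nn u + nn v →
      ∃ lam : ℝ, 0 ≤ lam ∧ (u = RealLinearCone.csmul lam v ∨ v = RealLinearCone.csmul lam u))
    {v w : F} (hvw : nn v = nn w) (hw : nn w ≠ 0) (h : nn (v + w) = nn v + nn w) : v = w := by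
  obtain ⟨lam, hlam, hv | hw'⟩ := hstrict v w h
  · have : lam = 1 := by
      rw [hv, hhom lam hlam] at hvw
      exact (mul_eq_right₀ hw).mp hvw
    rw [hv, this, RealLinearCone.one_csmul]
  · have : lam = 1 := by
      rw [hw', hhom lam hlam] at hvw hw
      exact (mul_eq_right₀ (right_ne_zero_of_mul hw)).mp hvw.symm
    rw [hw', this, RealLinearCone.one_csmul]

variable {V : Type*} [AddCommGroup V] [Module ℝ V] {ι : F → V} {B : V →ₗ[ℝ] V →ₗ[ℝ] ℝ}

theorem apply_self_eq_sq
    (hhom : ∀ a : ℝ, 0 ≤ a → ∀ v : F, nn (RealLinearCone.csmul a v) = a * nn v)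
    (hext : ∀ v w : F, B (ι v) (ι w) = hInner nn v w) (u : F) : B (ι u) (ι u) = nn u ^ 2 := by
  rw [hext, hInner_self hhom]

theorem apply_self_neg_of_apply_eq_zero (hnonneg : ∀ v : F, 0 ≤ nn v)
    (hrev : ∀ v w : F, nn v + nn w ≤ nn (v + w))
    (hhom : ∀ a : ℝ, 0 ≤ a → ∀ v : F, nn (RealLinearCone.csmul a v) = a * nn v)
    (hstrict : ∀ u v : F, nn (u + v) = nn u + nn v →
      ∃ lam : ℝ, 0 ≤ lam ∧ (u = RealLinearCone.csmul lam v ∨ v = RealLinearCone.csmul lam u))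
    (hsymm : ∀ x y : V, B x y = B y x) (hext : ∀ v w : F, B (ι v) (ι w) = hInner nn v w)
    {t : F} (ht : nn t = 1) {x : V} (hx : B (ι t) x = 0) (hx0 : x ≠ 0)
    {ε : ℝ} (hε : 0 < ε) {u : F} (hu : ι t + ε • x = ι u) : B x x < 0 := by
  have htt : B (ι t) (ι t) = 1 := by rw [apply_self_eq_sq hhom hext, ht, one_pow]
  have htu : hInner nn t u = 1 := by
    rw [← hext, ← hu]
    simp [htt, hx]
  have huu : nn u ^ 2 = 1 + ε ^ 2 * B x x := by
    rw [← apply_self_eq_sq hhom hext, ← hu]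
    simp only [map_add, map_smul, LinearMap.add_apply, LinearMap.smul_apply, smul_eq_mul, htt,
      hx, hsymm x (ι t)]
    ring
  have hu1 : nn u ≤ 1 := by simpa [ht, htu] using mul_le_hInner hnonneg hrev t u
  have hle : B x x ≤ 0 := by nlinarith [hnonneg u, pow_pos hε 2]
  refine hle.lt_of_ne fun hxx => hx0 ?_
  have hnu : nn u = 1 := by nlinarith [hnonneg u]
  -- `⟨t, u⟩ = 1 = ‖t‖‖u‖` is the equality case of reverse Cauchy–Schwarz
  obtain rfl : t = u := eq_of_nn_add_eq_add hhom hstrict (ht.trans hnu.symm) (by simp [hnu])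
    (nn_add_eq_of_hInner_eq_mul hnonneg (by rw [htu, ht, hnu, one_mul]))
  have hεx : ε • x = 0 := by simpa using hu
  exact (smul_eq_zero.mp hεx).resolve_left hε.ne'

end HyperbolicNorm

theorem core_implies_lorentzian_general {F : Type*} [AddCancelCommMonoid F] [RealLinearCone F]
    (nn : F → ℝ)
    (hnonneg : ∀ v : F, 0 ≤ nn v)
    (hrev : ∀ v w : F, nn v + nn w ≤ nn (v + w))
    (hhom : ∀ a : ℝ, 0 ≤ a → ∀ v : F, nn (RealLinearCone.csmul a v) = a * nn v)
    (hstrict : ∀ u v : F, nn (u + v) = nn u + nn v →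
      ∃ lam : ℝ, 0 ≤ lam ∧ (u = RealLinearCone.csmul lam v ∨ v = RealLinearCone.csmul lam u))
    {V : Type*} [AddCommGroup V] [Module ℝ V] (ι : F → V)
    (B : V →ₗ[ℝ] V →ₗ[ℝ] ℝ)
    (hsymm : ∀ x y : V, B x y = B y x)
    (hext : ∀ v w : F, B (ι v) (ι w) = hInner nn v w)
    (t : F) (ht : nn t = 1)
    (hcore : ∀ x : V, ∃ ε : ℝ, 0 < ε ∧ ∃ u : F, ι t + ε • x = ι u) :
    IsLorentzian B := by
  refine LinearMap.isLorentzian_of_neg_on_ker (τ := ι t) ?_ fun x hx hx0 => ?_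
  · rw [apply_self_eq_sq hhom hext, ht]
    norm_num
  · obtain ⟨ε, hε, u, hu⟩ := hcore x
    exact apply_self_neg_of_apply_eq_zero hnonneg hrev hhom hstrict hsymm hext ht hx hx0 hε hu

/-- Let `(F, ‖·‖)` be a finite, positively polarizable, strictly
hyperbolic proper hyperbolically normed cone containing a norm-one element, and
suppose there exists `t ∈ core(F)` with `‖t‖ = 1` (every direction in the span can be
followed a little from `t` while staying in `F`). Then the symmetric bilinear form `B`
induced on the span `V` of `F` is Lorentzian. -/
theorem core_implies_lorentzian {F : Type*} [AddCancelCommMonoid F] [RealLinearCone F]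
    (nn : F → ℝ)
    (hproper : ∀ v w : F, v + w = 0 → v = 0)
    (hnonneg : ∀ v : F, 0 ≤ nn v)
    (hrev : ∀ v w : F, nn v + nn w ≤ nn (v + w))
    (hhom : ∀ a : ℝ, 0 ≤ a → ∀ v : F, nn (RealLinearCone.csmul a v) = a * nn v)
    (hpol : ∀ v w : F, (nn (v + RealLinearCone.csmul 2 w)) ^ 2 + (nn v) ^ 2
      = 2 * (nn (v + w)) ^ 2 + 2 * (nn w) ^ 2)
    (hstrict : ∀ u v : F, nn (u + v) = nn u + nn v →
      ∃ lam : ℝ, 0 ≤ lam ∧ (u = RealLinearCone.csmul lam v ∨ v = RealLinearCone.csmul lam u))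
    (tstar : F) (htstar : nn tstar = 1)
    {V : Type*} [AddCommGroup V] [Module ℝ V] (ι : F → V)
    (hι_inj : Function.Injective ι)
    (hι_add : ∀ v w : F, ι (v + w) = ι v + ι w)
    (hι_smul : ∀ a : ℝ, 0 ≤ a → ∀ v : F, ι (RealLinearCone.csmul a v) = a • ι v)
    (hgen : ∀ x : V, ∃ v w : F, x = ι v - ι w)
    (B : V →ₗ[ℝ] V →ₗ[ℝ] ℝ)
    (hsymm : ∀ x y : V, B x y = B y x)
    (hext : ∀ v w : F, B (ι v) (ι w) = hInner nn v w)
    (t : F) (ht : nn t = 1)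
    (hcore : ∀ x : V, ∃ ε : ℝ, 0 < ε ∧ ∃ u : F, ι t + ε • x = ι u) :
    IsLorentzian B :=
  core_implies_lorentzian_general nn hnonneg hrev hhom hstrict ι B hsymm hext t ht hcore
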